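/- arXiv:2405.10352 — 2 statements merged into one kernel-verified Lean document; each statement's English description precedes it below -/
import Mathlib

section
/- Let p be a prime and m, n positive natural numbers with p^(n-1) < m ≤ p^n. Let A be the m×m Jordan block over ZMod p with eigenvalue 1, i.e., A = 1 + J where J is the matrix with entries J i j = 1 when j = i+1 and 0 otherwise. Then A, viewed as an element of the general linear group GL_m(ZMod p), has order exactly p^n; that is, A^(p^n) = 1 but A^(p^(n-1)) ≠ 1. -/
/-- The nilpotent upper-triangular Jordan block: entry `(i,j)` is `1` if `j = i + 1`
and `0` otherwise. -/
def jordanNilp (p m : ℕ) : Matrix (Fin m) (Fin m) (ZMod p) :=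
  Matrix.of fun i j => if (j : ℕ) = (i : ℕ) + 1 then 1 else 0

lemma jordanNilp_pow (p m k : ℕ) :
    (jordanNilp p m) ^ k =
      Matrix.of fun i j : Fin m => if (j : ℕ) = (i : ℕ) + k then 1 else 0 := by
  induction k with
  | zero =>
    ext i j
    simp [Matrix.one_apply, Fin.ext_iff, eq_comm]
  | succ k ih =>
    ext i j
    rw [pow_succ, ih]
    simp only [Matrix.mul_apply, Matrix.of_apply, jordanNilp, ite_mul, one_mul, zero_mul]
    by_cases h : (j : ℕ) = (i : ℕ) + (k + 1)
    · have hik : (i : ℕ) + k < m := by omega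
      rw [Finset.sum_eq_single (⟨(i : ℕ) + k, hik⟩ : Fin m)]
      · simp [h]; omega
      · intro l _ hl
        have : (l : ℕ) ≠ (i : ℕ) + k := fun hc => hl (Fin.ext hc)
        simp [this]
      · simp
    · rw [if_neg h, Finset.sum_eq_zero]
      intro l _
      by_cases hl : (l : ℕ) = (i : ℕ) + k
      · rw [if_pos hl, if_neg (by omega)]
      · rw [if_neg hl]

theorem orderOf_jordan_block (p m n : ℕ) [Fact p.Prime]
    (hm : 0 < m) (hn : 0 < n) (h1 : p ^ (n - 1) < m) (h2 : m ≤ p ^ n)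
    (A : GL (Fin m) (ZMod p))
    (hA : (A : Matrix (Fin m) (Fin m) (ZMod p)) = 1 + jordanNilp p m) :
    orderOf A = p ^ n ∧ A ^ (p ^ n) = 1 ∧ A ^ (p ^ (n - 1)) ≠ 1 := by
  haveI : NeZero m := ⟨hm.ne'⟩
  haveI : CharP (Matrix (Fin m) (Fin m) (ZMod p)) p := inferInstance
  have key : ∀ t : ℕ, ((A ^ (p ^ t) : GL (Fin m) (ZMod p)) : Matrix (Fin m) (Fin m) (ZMod p))
      = 1 + (jordanNilp p m) ^ (p ^ t) := by
    intro t
    rw [Units.val_pow_eq_pow_val, hA,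
      add_pow_char_pow_of_commute p t (Commute.one_left (jordanNilp p m)), one_pow]
  have hone : A ^ (p ^ n) = 1 := by
    ext1
    rw [key n, jordanNilp_pow]
    ext i j
    have : (j : ℕ) ≠ (i : ℕ) + p ^ n := by have := j.isLt; omega
    simp [this, Matrix.one_apply]
  have hne : A ^ (p ^ (n - 1)) ≠ 1 := by
    intro hcontra
    have h := key (n - 1)
    rw [hcontra, jordanNilp_pow] at h
    have := congrArg (fun M => M ⟨0, hm⟩ ⟨p ^ (n - 1), h1⟩) h
    simp only [Units.val_one, Matrix.add_apply, Matrix.one_apply, Matrix.of_apply] at this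
    have h0 : ((⟨0, hm⟩ : Fin m) : ℕ) ≠ ((⟨p ^ (n-1), h1⟩ : Fin m) : ℕ) := by
      simpa using (pow_pos (Fact.out (p := p.Prime)).pos (n-1)).ne
    rw [if_neg (fun hc => h0 (congrArg Fin.val hc)), if_pos (by simp)] at this
    simp at this
  refine ⟨?_, hone, hne⟩
  have hn' : n = (n - 1) + 1 := by omega
  rw [hn'] at hone ⊢
  exact orderOf_eq_prime_pow hne hone
end

section
/- Let p be a prime and m, n positive natural numbers with p^(n-1) < m ≤ p^n. Let V = Fin m → ZMod p, let A ∈ GL_m(ZMod p) be the Jordan block with eigenvalue 1 (entries 1 on the diagonal and first superdiagonal, 0 elsewhere), and let G be the semidirect product of the additive group V by the cyclic subgroup generated by A inside GL_m(ZMod p), where A acts on V by matrix-vector multiplication (the holomorph Hol(V, α)). Then G has cardinality p^(m+n). -/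
/-- The additive automorphism of `V = Fin m → ZMod p` given by right matrix-vector
multiplication (`vecMul`) by an invertible matrix `g`, i.e. `v ↦ v · g`. -/
def vecMulAut {p m : ℕ} (g : GL (Fin m) (ZMod p)) : AddAut (Fin m → ZMod p) where
  toFun v := Matrix.vecMul v (g : Matrix (Fin m) (Fin m) (ZMod p))
  invFun v := Matrix.vecMul v ((↑(g⁻¹) : Matrix (Fin m) (Fin m) (ZMod p)))
  left_inv v := by simp [Matrix.vecMul_vecMul]
  right_inv v := by simp [Matrix.vecMul_vecMul]
  map_add' u v := Matrix.add_vecMul (g : Matrix (Fin m) (Fin m) (ZMod p)) u v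

set_option maxHeartbeats 1000000 in
/-- The action of the cyclic subgroup `⟨A⟩ = Subgroup.zpowers A` on the (multiplicative
version of the) additive group `V = Fin m → ZMod p`, a matrix acting by right
matrix-vector multiplication `v ↦ v · A`. -/
def holPhi {p m : ℕ} (A : GL (Fin m) (ZMod p)) :
    ↥(Subgroup.zpowers A) →* MulAut (Multiplicative (Fin m → ZMod p)) where
  toFun g := AddEquiv.toMultiplicative (vecMulAut (g : GL (Fin m) (ZMod p)))
  map_one' := by
    ext v
    simp [vecMulAut, AddEquiv.toMultiplicative]
  map_mul' g h := by
    rw [show g * h = h * g from (Subgroup.zpowers_isMulCommutative A).is_comm.comm g h]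
    ext v
    simp [vecMulAut, AddEquiv.toMultiplicative, Matrix.vecMul_vecMul]

/-! Since `|V ⋊ ⟨A⟩| = p ^ m · ord A`, everything reduces to `ord A = p ^ n`. In characteristic `p`
the Frobenius identity gives `(1 + J) ^ p ^ k = 1 + J ^ p ^ k`, and `J ^ k` shifts by `k`, so it
vanishes exactly when `m ≤ k`; hence `ord A` is the least power of `p` that is at least `m`. -/

theorem orderOf_one_add_eq_prime_pow {R : Type*} [Ring R] {p : ℕ} [Fact p.Prime] [CharP R p]
    {N : R} {k : ℕ} (hk : N ^ p ^ k ≠ 0) (hk1 : N ^ p ^ (k + 1) = 0) :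
    orderOf (1 + N) = p ^ (k + 1) := by
  have frobenius (j : ℕ) : (1 + N) ^ p ^ j = 1 + N ^ p ^ j := by
    rw [add_pow_char_pow_of_commute p j (Commute.one_left N), one_pow]
  exact orderOf_eq_prime_pow (by rwa [frobenius, add_eq_left]) (by rw [frobenius, hk1, add_zero])

theorem jordanNilp_mul_apply {p m : ℕ} (M : Matrix (Fin m) (Fin m) (ZMod p)) (i j : Fin m) :
    (jordanNilp p m * M) i j = if h : (i : ℕ) + 1 < m then M ⟨i + 1, h⟩ j else 0 := by
  simp only [Matrix.mul_apply, jordanNilp, Matrix.of_apply, ite_mul, one_mul, zero_mul]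
  split_ifs with h
  · rw [Finset.sum_eq_single_of_mem ⟨i + 1, h⟩ (Finset.mem_univ _)] <;> simp_all [Fin.ext_iff]
  · exact Finset.sum_eq_zero fun l _ => if_neg (by omega)

theorem jordanNilp_pow_apply (p m k : ℕ) (i j : Fin m) :
    (jordanNilp p m ^ k) i j = if (j : ℕ) = i + k then 1 else 0 := by
  induction k generalizing i with
  | zero => simp [Matrix.one_apply, Fin.ext_iff, eq_comm]
  | succ k ih =>
    rw [pow_succ', jordanNilp_mul_apply]
    split_ifs <;> simp_all <;> omega

theorem jordanNilp_pow_eq_zero_iff {p m k : ℕ} [Nontrivial (ZMod p)] :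
    jordanNilp p m ^ k = 0 ↔ m ≤ k := by
  refine ⟨fun h => ?_, fun h => ?_⟩
  · by_contra! hk
    simpa [jordanNilp_pow_apply] using congr_fun₂ h ⟨0, by omega⟩ ⟨k, hk⟩
  · ext i j
    simp only [jordanNilp_pow_apply, Matrix.zero_apply]
    exact if_neg (by omega)

theorem orderOf_one_add_jordanNilp {p m k : ℕ} [Fact p.Prime] (h1 : p ^ k < m)
    (h2 : m ≤ p ^ (k + 1)) : orderOf (1 + jordanNilp p m) = p ^ (k + 1) := by
  -- `Matrix.charP` needs a nonempty index type
  have : Nonempty (Fin m) := ⟨⟨0, by omega⟩⟩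
  exact orderOf_one_add_eq_prime_pow (jordanNilp_pow_eq_zero_iff.not.mpr h1.not_ge)
    (jordanNilp_pow_eq_zero_iff.mpr h2)

theorem card_holomorph_jordan_block_general (p m n : ℕ) [Fact p.Prime]
    (h1 : p ^ (n - 1) < m) (h2 : m ≤ p ^ n)
    (A : GL (Fin m) (ZMod p))
    (hA : (A : Matrix (Fin m) (Fin m) (ZMod p)) = 1 + jordanNilp p m) :
    Nat.card (Multiplicative (Fin m → ZMod p) ⋊[holPhi A] ↥(Subgroup.zpowers A))
      = p ^ (m + n) := by
  obtain _ | k := n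
  · simp at h1 h2
    omega
  rw [Nat.add_sub_cancel] at h1
  rw [SemidirectProduct.card, Nat.card_zpowers, ← orderOf_units, hA,
    orderOf_one_add_jordanNilp h1 h2, pow_add p m]
  simp

theorem card_holomorph_jordan_block (p m n : ℕ) [Fact p.Prime]
    (hm : 0 < m) (hn : 0 < n) (h1 : p ^ (n - 1) < m) (h2 : m ≤ p ^ n)
    (A : GL (Fin m) (ZMod p))
    (hA : (A : Matrix (Fin m) (Fin m) (ZMod p)) = 1 + jordanNilp p m) :
    Nat.card (Multiplicative (Fin m → ZMod p) ⋊[holPhi A] ↥(Subgroup.zpowers A))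
      = p ^ (m + n) :=
  card_holomorph_jordan_block_general p m n h1 h2 A hA
end
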